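/- Coarse entropy is monotone under coarse embeddings: if there exists a coarse embedding f: X → Y between metric spaces, then h_∞(X) ≤ h_∞(Y). -/

import Mathlib

open Filter Set Metric
open scoped ENNReal

noncomputable section

/-- `p` represents a `δ`-pseudoorbit of `f` of length `n` starting at `x₀`:
`(p 0, p 1, …, p n)` with `p 0 = x₀` and `dist (f (p i)) (p (i+1)) ≤ δ` for `i < n`.
(Only the values `p 0, …, p n` are relevant.) -/
def IsPseudoOrbit {X : Type*} [MetricSpace X] (f : X → X) (δ : ℝ) (n : ℕ) (x₀ : X)
    (p : ℕ → X) : Prop :=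
  p 0 = x₀ ∧ ∀ i < n, dist (f (p i)) (p (i + 1)) ≤ δ

/-- The distance between two pseudoorbits of length `n`:
the maximum of `dist (p i) (q i)` over `0 ≤ i ≤ n`. -/
def orbitDist {X : Type*} [MetricSpace X] (n : ℕ) (p q : ℕ → X) : ℝ :=
  (Finset.range (n + 1)).sup' (by simp) fun i => dist (p i) (q i)

/-- A family `S` of pseudoorbits of length `n` is `R`-separated if any two distinct
members are at pseudoorbit distance at least `R`. -/
def IsSepFamily {X : Type*} [MetricSpace X] (n : ℕ) (R : ℝ) (S : Set (ℕ → X)) : Prop :=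
  ∀ p ∈ S, ∀ q ∈ S, p ≠ q → R ≤ orbitDist n p q

/-- `sepCard f n R δ x₀` is `s(f,n,R,δ,x₀)`: the supremum of cardinalities of
`R`-separated sets of `δ`-pseudoorbits of `f` of length `n` starting at `x₀`. -/
def sepCard {X : Type*} [MetricSpace X] (f : X → X) (n : ℕ) (R δ : ℝ) (x₀ : X) : ℝ≥0∞ :=
  ⨆ (S : Set (ℕ → X)) (_ : ∀ p ∈ S, IsPseudoOrbit f δ n x₀ p) (_ : IsSepFamily n R S),
    (S.encard : ℝ≥0∞)

/-- Extended logarithm `[0,∞] → [0,∞]` (negative values are truncated to `0`). -/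
def elog (x : ℝ≥0∞) : ℝ≥0∞ :=
  if x = ⊤ then ⊤ else ENNReal.ofReal (Real.log x.toReal)

/-- The coarse entropy of `f : X → X` computed at the basepoint `x₀`:
`h_∞(f) = lim_{δ→∞} lim_{R→∞} limsup_{n→∞} (1/n) log s(f,n,R,δ,x₀)`.
Since `s` is nondecreasing in `δ` and nonincreasing in `R`, the limits in `δ` and `R`
are the supremum over `δ > 0` and the infimum over `R > 0`, respectively. -/
def coarseEntropyAt {X : Type*} [MetricSpace X] (f : X → X) (x₀ : X) : ℝ≥0∞ :=
  ⨆ (δ : ℝ) (_ : 0 < δ), ⨅ (R : ℝ) (_ : 0 < R),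
    Filter.atTop.limsup fun n : ℕ => elog (sepCard f n R δ x₀) / (n : ℝ≥0∞)

end

/-- `f : X → Y` is a coarse embedding: there are nondecreasing control functions
`ρ₋, ρ₊ : ℝ → ℝ` with `ρ₋ → ∞` and
`ρ₋(d(x,x')) ≤ d(f x, f x') ≤ ρ₊(d(x,x'))` for all `x, x'`. -/
def IsCoarseEmbedding {X Y : Type*} [MetricSpace X] [MetricSpace Y] (f : X → Y) : Prop :=
  ∃ ρminus ρplus : ℝ → ℝ, Monotone ρminus ∧ Monotone ρplus ∧
    Filter.Tendsto ρminus Filter.atTop Filter.atTop ∧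
    ∀ x x' : X, ρminus (dist x x') ≤ dist (f x) (f x') ∧
      dist (f x) (f x') ≤ ρplus (dist x x')

/-- `f : X → Y` is a coarse equivalence: a coarse embedding with coarsely dense image. -/
def IsCoarseEquiv {X Y : Type*} [MetricSpace X] [MetricSpace Y] (f : X → Y) : Prop :=
  IsCoarseEmbedding f ∧ ∃ A : ℝ, 0 ≤ A ∧ ∀ y : Y, ∃ x : X, dist y (f x) < A

/-!
A δ-path in `X` is pushed forward by the coarse embedding `f` to a δ'-path in `Y`: apply `f`
pointwise and move the initial point `f x₀` to `y₀`, at the price of `dist y₀ (f x₀)` on the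
first step. The upper control function bounds δ' in terms of δ, and the lower control function
turns `R`-separation into `R'`-separation once `R` is large, which also makes the push-forward
injective on separated families. Hence `s(n,R,δ,x₀) ≤ s(n,R',δ',y₀)` for every `n`, and the
inequality passes through the `limsup`, the infimum over `R` and the supremum over `δ`.
-/

lemma elog_mono : Monotone elog := by
  intro a b hab
  unfold elog
  rcases eq_or_ne b ⊤ with rfl | hb
  · simp
  have ha : a ≠ ⊤ := ne_top_of_le_ne_top hb hab
  rw [if_neg ha, if_neg hb]
  rcases eq_or_ne a 0 with rfl | ha₀
  · simp
  exact ENNReal.ofReal_le_ofReal <| Real.log_le_log (ENNReal.toReal_pos ha₀ ha)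
    ((ENNReal.toReal_le_toReal ha hb).mpr hab)

section Paths

variable {X Y : Type*} [MetricSpace X] [MetricSpace Y]

lemma orbitDist_self (n : ℕ) (p : ℕ → X) : orbitDist n p p = 0 := by
  simp [orbitDist]

lemma le_orbitDist_iff {n : ℕ} {R : ℝ} {p q : ℕ → X} :
    R ≤ orbitDist n p q ↔ ∃ i ∈ Finset.range (n + 1), R ≤ dist (p i) (q i) :=
  Finset.le_sup'_iff _

lemma sepCard_le_sepCard_of_map {f : X → X} {g : Y → Y} {n : ℕ} {R R' δ δ' : ℝ}
    {x₀ : X} {y₀ : Y} (Φ : (ℕ → X) → (ℕ → Y)) (hR' : 0 < R')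
    (hΦ : ∀ p, IsPseudoOrbit f δ n x₀ p → IsPseudoOrbit g δ' n y₀ (Φ p))
    (hsep : ∀ p q, IsPseudoOrbit f δ n x₀ p → IsPseudoOrbit f δ n x₀ q →
      R ≤ orbitDist n p q → R' ≤ orbitDist n (Φ p) (Φ q)) :
    sepCard f n R δ x₀ ≤ sepCard g n R' δ' y₀ := by
  refine iSup₂_le fun S hS => iSup_le fun hSsep => ?_
  have hinj : InjOn Φ S := by
    intro p hp q hq hpq
    by_contra hne
    have := hsep p q (hS p hp) (hS q hq) (hSsep p hp q hq hne)
    rw [hpq, orbitDist_self] at this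
    exact hR'.not_ge this
  have hΦS : ∀ p ∈ Φ '' S, IsPseudoOrbit g δ' n y₀ p := by
    rintro _ ⟨p, hp, rfl⟩
    exact hΦ p (hS p hp)
  have hΦSsep : IsSepFamily n R' (Φ '' S) := by
    rintro _ ⟨p, hp, rfl⟩ _ ⟨q, hq, rfl⟩ hne
    exact hsep p q (hS p hp) (hS q hq) (hSsep p hp q hq (ne_of_apply_ne Φ hne))
  rw [← hinj.encard_image]
  exact le_iSup₂_of_le (Φ '' S) hΦS (le_iSup_of_le hΦSsep le_rfl)

variable {f : X → Y} {n : ℕ} {x₀ : X} {p q : ℕ → X}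

lemma isPseudoOrbit_id_update_comp {δ δ₁ : ℝ} (y₀ : Y)
    (hf : ∀ a b, dist a b ≤ δ → dist (f a) (f b) ≤ δ₁) (hp : IsPseudoOrbit id δ n x₀ p) :
    IsPseudoOrbit id (dist y₀ (f x₀) + δ₁) n y₀ (Function.update (f ∘ p) 0 y₀) := by
  obtain ⟨hp₀, hstep⟩ := hp
  refine ⟨by simp, fun i hi => ?_⟩
  have hfstep : dist (f (p i)) (f (p (i + 1))) ≤ δ₁ := hf _ _ (hstep i hi)
  rcases Nat.eq_zero_or_pos i with rfl | hi₀
  · simp only [id_eq, zero_add, Function.update_self, Function.update_of_ne one_ne_zero,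
      Function.comp_apply]
    calc dist y₀ (f (p 1)) ≤ dist y₀ (f x₀) + dist (f x₀) (f (p 1)) := dist_triangle _ _ _
      _ ≤ dist y₀ (f x₀) + δ₁ := by rw [← hp₀]; gcongr
  · simp only [id_eq, Function.update_of_ne hi₀.ne', Function.update_of_ne i.succ_ne_zero,
      Function.comp_apply]
    linarith [dist_nonneg (x := y₀) (y := f x₀)]

lemma le_orbitDist_update_comp {R R' : ℝ} (y₀ : Y) (hR : 0 < R)
    (hf : ∀ a b, R ≤ dist a b → R' ≤ dist (f a) (f b)) (hpq : p 0 = q 0)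
    (h : R ≤ orbitDist n p q) :
    R' ≤ orbitDist n (Function.update (f ∘ p) 0 y₀) (Function.update (f ∘ q) 0 y₀) := by
  obtain ⟨i, hi, hRi⟩ := le_orbitDist_iff.mp h
  have hi₀ : i ≠ 0 := by
    rintro rfl
    rw [hpq, dist_self] at hRi
    exact hR.not_ge hRi
  refine le_orbitDist_iff.mpr ⟨i, hi, ?_⟩
  simpa [Function.update_of_ne hi₀] using hf _ _ hRi

lemma sepCard_id_le_of_controlled {R R' δ δ₁ : ℝ} (y₀ : Y) (hR : 0 < R) (hR' : 0 < R')
    (hclose : ∀ a b, dist a b ≤ δ → dist (f a) (f b) ≤ δ₁)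
    (hfar : ∀ a b, R ≤ dist a b → R' ≤ dist (f a) (f b)) :
    sepCard id n R δ x₀ ≤ sepCard id n R' (dist y₀ (f x₀) + δ₁) y₀ :=
  sepCard_le_sepCard_of_map (fun p => Function.update (f ∘ p) 0 y₀) hR'
    (fun _ hp => isPseudoOrbit_id_update_comp y₀ hclose hp)
    (fun _ _ hp hq => le_orbitDist_update_comp y₀ hR hfar (hp.1.trans hq.1.symm))

lemma coarseEntropyAt_le_of_sepCard_le {f : X → X} {g : Y → Y} {y₀ : Y}
    (h : ∀ δ > 0, ∃ δ' > 0, ∀ R' > 0, ∃ R > 0,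
      ∀ n, sepCard f n R δ x₀ ≤ sepCard g n R' δ' y₀) :
    coarseEntropyAt f x₀ ≤ coarseEntropyAt g y₀ := by
  refine iSup₂_le fun δ hδ => ?_
  obtain ⟨δ', hδ', hR⟩ := h δ hδ
  refine le_iSup₂_of_le δ' hδ' (le_iInf₂ fun R' hR' => ?_)
  obtain ⟨R, hR, hle⟩ := hR R' hR'
  exact iInf₂_le_of_le R hR <| limsup_le_limsup <| Eventually.of_forall fun n =>
    ENNReal.div_le_div_right (elog_mono (hle n)) _

end Paths

/-- Coarse entropy is monotone under coarse embeddings: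
if there is a coarse embedding `f : X → Y`, then `h_∞(X) ≤ h_∞(Y)`. -/
theorem coarseEntropy_le_of_coarseEmbedding {X Y : Type*} [MetricSpace X] [MetricSpace Y]
    (f : X → Y) (hf : IsCoarseEmbedding f) (x₀ : X) (y₀ : Y) :
    coarseEntropyAt (id : X → X) x₀ ≤ coarseEntropyAt (id : Y → Y) y₀ := by
  obtain ⟨ρminus, ρplus, -, hρplus, hρminus, hbounds⟩ := hf
  refine coarseEntropyAt_le_of_sepCard_le fun δ hδ =>
    ⟨dist y₀ (f x₀) + max (ρplus δ) 1, by positivity, fun R' hR' => ?_⟩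
  obtain ⟨R₀, hR₀⟩ := eventually_atTop.mp (hρminus.eventually_ge_atTop R')
  refine ⟨max R₀ 1, by positivity, fun n => sepCard_id_le_of_controlled y₀ (by positivity) hR'
    (fun a b hab => ?_) (fun a b hab => ?_)⟩
  · exact ((hbounds a b).2.trans (hρplus hab)).trans (le_max_left _ _)
  · exact (hR₀ _ ((le_max_left _ _).trans hab)).trans (hbounds a b).1
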